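/- Let ξ ∈ ℝ² with |ξ|²/4 ≤ |ξ₁| < |ξ|²/2 (the region D₃), λ± = (-|ξ|² ± √(|ξ|⁴ - 4ξ₁²))/2. Then λ₊ = -2ξ₁²/(|ξ|² + √(|ξ|⁴ - 4ξ₁²)) ∈ (-|ξ|²/2, -|ξ|²/16], λ₋ ∈ (-|ξ|², -|ξ|²/2), and e^{λ₊t} - e^{λ₋t} ≤ e^{λ₊t}(λ₊ - λ₋)t for all t ≥ 0. -/

import Mathlib

/-!
`λ±` are the roots of `λ² + |ξ|² λ + ξ₁²`, so `λ₊ λ₋ = ξ₁²` gives the rationalized formula for `λ₊`.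
On `D₃` the discriminant `|ξ|⁴ - 4ξ₁²` lies in `(0, 3|ξ|⁴/4]`, so its square root lies in
`(0, 7|ξ|²/8]`, and is `< |ξ|²` because `ξ₁ ≠ 0`; the bounds on `λ±` are a rewriting of this.
The exponential estimate is `e^x ≥ 1 + x` at `x = (λ₋ - λ₊)t`, multiplied by `e^{λ₊t}`.
-/

open Real

theorem exp_sub_exp_le_exp_mul_sub (a b : ℝ) : exp b - exp a ≤ exp b * (b - a) := by
  have hsplit : exp a = exp b * exp (a - b) := by rw [← exp_add, add_sub_cancel]
  calc exp b - exp a = exp b * (1 - exp (a - b)) := by rw [hsplit]; ring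
    _ ≤ exp b * (b - a) :=
      mul_le_mul_of_nonneg_left (by linarith [add_one_le_exp (a - b)]) (exp_pos b).le

section QuadraticRoots

variable {s c : ℝ}

theorem neg_add_sqrt_discrim_div_two_eq (hs : 0 < s) (hc : 4 * c ≤ s ^ 2) :
    (-s + √(s ^ 2 - 4 * c)) / 2 = -(2 * c) / (s + √(s ^ 2 - 4 * c)) := by
  have hr := Real.sq_sqrt (sub_nonneg.mpr hc)
  rw [div_eq_div_iff two_ne_zero (by positivity)]
  linear_combination hr

theorem sqrt_discrim_pos (hc : 4 * c < s ^ 2) : 0 < √(s ^ 2 - 4 * c) :=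
  Real.sqrt_pos.mpr (by linarith)

theorem sqrt_discrim_lt (hs : 0 < s) (hc : 0 < c) : √(s ^ 2 - 4 * c) < s :=
  (Real.sqrt_lt' hs).mpr (by linarith)

theorem sqrt_discrim_le (hs : 0 ≤ s) (hc : s ^ 2 / 16 ≤ c) : √(s ^ 2 - 4 * c) ≤ 7 * s / 8 :=
  Real.sqrt_le_iff.mpr ⟨by positivity, by nlinarith⟩

theorem neg_add_sqrt_discrim_div_two_mem_Ioc (hs : 0 < s) (hc : s ^ 2 / 16 ≤ c)
    (hc' : 4 * c < s ^ 2) :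
    (-s + √(s ^ 2 - 4 * c)) / 2 ∈ Set.Ioc (-(s / 2)) (-(s / 16)) := by
  have := sqrt_discrim_pos hc'
  have := sqrt_discrim_le hs.le hc
  constructor <;> linarith

theorem neg_sub_sqrt_discrim_div_two_mem_Ioo (hs : 0 < s) (hc : 0 < c) (hc' : 4 * c < s ^ 2) :
    (-s - √(s ^ 2 - 4 * c)) / 2 ∈ Set.Ioo (-s) (-(s / 2)) := by
  have := sqrt_discrim_pos hc'
  have := sqrt_discrim_lt hs hc
  constructor <;> linarith

end QuadraticRoots

theorem stmt5_general (ξ₁ ξ₂ : ℝ)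
    (h1 : (ξ₁ ^ 2 + ξ₂ ^ 2) / 4 ≤ |ξ₁|) (h2 : |ξ₁| < (ξ₁ ^ 2 + ξ₂ ^ 2) / 2) :
    let s : ℝ := ξ₁ ^ 2 + ξ₂ ^ 2
    let lamp : ℝ := (-s + Real.sqrt (s ^ 2 - 4 * ξ₁ ^ 2)) / 2
    let lamm : ℝ := (-s - Real.sqrt (s ^ 2 - 4 * ξ₁ ^ 2)) / 2
    lamp = -(2 * ξ₁ ^ 2) / (s + Real.sqrt (s ^ 2 - 4 * ξ₁ ^ 2)) ∧
    lamp ∈ Set.Ioc (-(s / 2)) (-(s / 16)) ∧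
    lamm ∈ Set.Ioo (-s) (-(s / 2)) ∧
    ∀ t : ℝ, 0 ≤ t →
      Real.exp (lamp * t) - Real.exp (lamm * t)
        ≤ Real.exp (lamp * t) * (lamp - lamm) * t := by
  intro s lamp lamm
  have hs : 0 < s := by linarith [h1.trans_lt h2]
  have habs : |ξ₁| ^ 2 = ξ₁ ^ 2 := sq_abs ξ₁
  have hlow : s ^ 2 / 16 ≤ ξ₁ ^ 2 := by nlinarith
  have hup : 4 * ξ₁ ^ 2 < s ^ 2 := by nlinarith [abs_nonneg ξ₁]
  have hξ₁ : 0 < ξ₁ ^ 2 := lt_of_lt_of_le (by positivity) hlow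
  refine ⟨neg_add_sqrt_discrim_div_two_eq hs hup.le,
    neg_add_sqrt_discrim_div_two_mem_Ioc hs hlow hup,
    neg_sub_sqrt_discrim_div_two_mem_Ioo hs hξ₁ hup, fun t _ => ?_⟩
  have := exp_sub_exp_le_exp_mul_sub (lamm * t) (lamp * t)
  rwa [← sub_mul, ← mul_assoc] at this

/-- On `D₃` (`|ξ|²/4 ≤ |ξ₁| < |ξ|²/2`), with
`λ± = (-|ξ|² ± √(|ξ|⁴-4ξ₁²))/2`:
`λ₊ = -2ξ₁²/(|ξ|² + √(|ξ|⁴-4ξ₁²)) ∈ (-|ξ|²/2, -|ξ|²/16]`,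
`λ₋ ∈ (-|ξ|², -|ξ|²/2)`, and `e^{λ₊t} - e^{λ₋t} ≤ e^{λ₊t}(λ₊-λ₋)t` for all `t ≥ 0`. -/
theorem stmt5 (ξ₁ ξ₂ : ℝ) (hne : (ξ₁, ξ₂) ≠ (0, 0))
    (h1 : (ξ₁ ^ 2 + ξ₂ ^ 2) / 4 ≤ |ξ₁|) (h2 : |ξ₁| < (ξ₁ ^ 2 + ξ₂ ^ 2) / 2) :
    let s : ℝ := ξ₁ ^ 2 + ξ₂ ^ 2
    let lamp : ℝ := (-s + Real.sqrt (s ^ 2 - 4 * ξ₁ ^ 2)) / 2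
    let lamm : ℝ := (-s - Real.sqrt (s ^ 2 - 4 * ξ₁ ^ 2)) / 2
    lamp = -(2 * ξ₁ ^ 2) / (s + Real.sqrt (s ^ 2 - 4 * ξ₁ ^ 2)) ∧
    lamp ∈ Set.Ioc (-(s / 2)) (-(s / 16)) ∧
    lamm ∈ Set.Ioo (-s) (-(s / 2)) ∧
    ∀ t : ℝ, 0 ≤ t →
      Real.exp (lamp * t) - Real.exp (lamm * t)
        ≤ Real.exp (lamp * t) * (lamp - lamm) * t :=
  stmt5_general ξ₁ ξ₂ h1 h2
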